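/- For all integers λ₁ ≥ λ₂ ≥ 0 the following identity holds in F: (R/Π)·[(x₂^{λ₁+1}x₃^{λ₂} − x₂^{λ₂}x₃^{λ₁+1})/(x₁+y) + (x₃^{λ₁+1}x₁^{λ₂} − x₃^{λ₂}x₁^{λ₁+1})/(x₂+y) + (x₁^{λ₁+1}x₂^{λ₂} − x₁^{λ₂}x₂^{λ₁+1})/(x₃+y)] = Σ y^{i+j}·s_{(λ₁−i, λ₂−j, 0)}, where the sum is over (i,j) ∈ {0,1}² such that λ₁−i ≥ λ₂−j ≥ 0. (The right side is the hook Schur function / character of the simple gl(3|1)-summand I_{(λ₁,λ₂,0,0)} of tensor powers of the (3|1)-dimensional super vector space; the left side is its closed Macdonald-determinant form, equal to the Su–Zhang character of V(λ₁,λ₂,0|0).) -/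
import Mathlib

set_option maxHeartbeats 1000000

noncomputable section

/-- The field of rational functions over ℚ in four variables. -/
abbrev F : Type := FractionRing (MvPolynomial (Fin 4) ℚ)

def x1 : F := algebraMap (MvPolynomial (Fin 4) ℚ) F (MvPolynomial.X 0)
def x2 : F := algebraMap (MvPolynomial (Fin 4) ℚ) F (MvPolynomial.X 1)
def x3 : F := algebraMap (MvPolynomial (Fin 4) ℚ) F (MvPolynomial.X 2)
def y  : F := algebraMap (MvPolynomial (Fin 4) ℚ) F (MvPolynomial.X 3)

/-- `R = (x₁+y)(x₂+y)(x₃+y)`. -/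
def R : F := (x1 + y) * (x2 + y) * (x3 + y)

/-- `Π = (x₁−x₂)(x₂−x₃)(x₁−x₃)`. -/
def P : F := (x1 - x2) * (x2 - x3) * (x1 - x3)

/-- `a(t,u,v)` : determinant of the 3×3 matrix with `i`-th row `(xᵢ^{t+2}, xᵢ^{u+1}, xᵢ^v)`. -/
def a (t u v : ℤ) : F :=
  Matrix.det !![x1 ^ (t+2), x1 ^ (u+1), x1 ^ v;
                x2 ^ (t+2), x2 ^ (u+1), x2 ^ v;
                x3 ^ (t+2), x3 ^ (u+1), x3 ^ v]

/-- Complete homogeneous symmetric polynomial of degree `k` in three variables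
(`0` for `k < 0`). -/
def hc (u v w : F) (k : ℤ) : F :=
  if k < 0 then 0
  else ∑ i ∈ Finset.range (k.toNat + 1), ∑ j ∈ Finset.range (k.toNat - i + 1),
    u ^ i * v ^ j * w ^ (k.toNat - i - j)

def h (k : ℤ) : F := hc x1 x2 x3 k

def hbar (k : ℤ) : F := hc x1⁻¹ x2⁻¹ x3⁻¹ k

/-- Elementary symmetric polynomials in `x₁, x₂, x₃`. -/
def e : ℕ → F
  | 0 => 1
  | 1 => x1 + x2 + x3
  | 2 => x1*x2 + x1*x3 + x2*x3
  | 3 => x1*x2*x3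
  | _ => 0

/-- Character of the `j`-th super exterior power `Λ_j`. -/
def lamCh (j : ℕ) : F := ∑ r ∈ Finset.range (min 3 j + 1), e r * y ^ (j - r)

/-- Character of the dual `S_j*` of the `j`-th super symmetric power. -/
def sBarCh (j : ℕ) : F := hbar j + y⁻¹ * hbar ((j : ℤ) - 1)

/-- Schur polynomial: `s_μ · Π = det (xᵢ^{μⱼ+3−j})`. -/
def schur (m1 m2 m3 : ℤ) : F := a m1 m2 m3 / P

/- ### Auxiliary lemmas -/

lemma ne0 (p : MvPolynomial (Fin 4) ℚ) (f : Fin 4 → ℚ)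
    (h : MvPolynomial.eval f p ≠ 0) : algebraMap (MvPolynomial (Fin 4) ℚ) F p ≠ 0 := by
  intro h0
  have hp : p = 0 :=
    (map_eq_zero_iff _ (IsFractionRing.injective (MvPolynomial (Fin 4) ℚ) F)).mp h0
  rw [hp] at h; simp at h

lemma hx1 : x1 ≠ 0 := by apply ne0 _ (fun _ => 1); simp
lemma hx2 : x2 ≠ 0 := by apply ne0 _ (fun _ => 1); simp
lemma hx3 : x3 ≠ 0 := by apply ne0 _ (fun _ => 1); simp
lemma h12 : x1 - x2 ≠ 0 := by rw [x1, x2, ← map_sub]; apply ne0 _ ![1,0,0,0]; simp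
lemma h23 : x2 - x3 ≠ 0 := by rw [x2, x3, ← map_sub]; apply ne0 _ ![0,1,0,0]; simp
lemma h13 : x1 - x3 ≠ 0 := by rw [x1, x3, ← map_sub]; apply ne0 _ ![1,0,0,0]; simp
lemma h1y : x1 + y ≠ 0 := by rw [x1, y, ← map_add]; apply ne0 _ (fun _ => 1); simp
lemma h2y : x2 + y ≠ 0 := by rw [x2, y, ← map_add]; apply ne0 _ (fun _ => 1); simp
lemma h3y : x3 + y ≠ 0 := by rw [x3, y, ← map_add]; apply ne0 _ (fun _ => 1); simp
lemma hP : P ≠ 0 := by rw [P]; exact mul_ne_zero (mul_ne_zero h12 h23) h13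

lemma det3 (a b c d e f g i j : F) :
    Matrix.det !![a,b,c;d,e,f;g,i,j] = a*e*j - a*f*i - b*d*j + b*f*g + c*d*i - c*e*g := by
  rw [Matrix.det_fin_three]
  simp

/-- explicit 3×3 determinant with last column of ones -/
def dt (a1 b1 a2 b2 a3 b3 : F) : F :=
  a1*b2 - a1*b3 - b1*a2 + b1*a3 + a2*b3 - a3*b2

lemma master (A1 A2 A3 B1 B2 B3 : F) :
    (R / P) * ((A2 * x2 * B3 - B2 * (A3 * x3)) / (x1 + y)
             + (A3 * x3 * B1 - B3 * (A1 * x1)) / (x2 + y)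
             + (A1 * x1 * B2 - B1 * (A2 * x2)) / (x3 + y))
    = (dt (A1*x1*x1) (B1*x1) (A2*x2*x2) (B2*x2) (A3*x3*x3) (B3*x3)
      + y * dt (A1*x1) (B1*x1) (A2*x2) (B2*x2) (A3*x3) (B3*x3)
      + y * dt (A1*x1*x1) B1 (A2*x2*x2) B2 (A3*x3*x3) B3
      + y^2 * dt (A1*x1) B1 (A2*x2) B2 (A3*x3) B3) / P := by
  rw [R, P, dt, dt, dt, dt]
  field_simp [h12, h23, h13, h1y, h2y, h3y]
  ring

lemma a00 (t u : ℤ) : a t u 0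
    = dt (x1^t*x1*x1) (x1^u*x1) (x2^t*x2*x2) (x2^u*x2) (x3^t*x3*x3) (x3^u*x3) := by
  rw [a, det3, dt, show t+2 = t+1+1 by ring]
  simp only [zpow_add_one₀ hx1, zpow_add_one₀ hx2, zpow_add_one₀ hx3, zpow_zero]
  ring

lemma a10 (t u : ℤ) : a (t-1) u 0
    = dt (x1^t*x1) (x1^u*x1) (x2^t*x2) (x2^u*x2) (x3^t*x3) (x3^u*x3) := by
  rw [a, det3, dt, show t-1+2 = t+1 by ring]
  simp only [zpow_add_one₀ hx1, zpow_add_one₀ hx2, zpow_add_one₀ hx3, zpow_zero]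
  ring

lemma a01 (t u : ℤ) : a t (u-1) 0
    = dt (x1^t*x1*x1) (x1^u) (x2^t*x2*x2) (x2^u) (x3^t*x3*x3) (x3^u) := by
  rw [a, det3, dt, show t+2 = t+1+1 by ring, show u-1+1 = u by ring]
  simp only [zpow_add_one₀ hx1, zpow_add_one₀ hx2, zpow_add_one₀ hx3, zpow_zero]
  ring

lemma a11 (t u : ℤ) : a (t-1) (u-1) 0
    = dt (x1^t*x1) (x1^u) (x2^t*x2) (x2^u) (x3^t*x3) (x3^u) := by
  rw [a, det3, dt, show t-1+2 = t+1 by ring, show u-1+1 = u by ring]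
  simp only [zpow_add_one₀ hx1, zpow_add_one₀ hx2, zpow_add_one₀ hx3, zpow_zero]
  ring

/-- The Macdonald determinant form of `ch I_{(λ₁,λ₂,0,0)}` (= the Su–Zhang character of
`V(λ₁,λ₂,0|0)`) equals the hook Schur function
`Σ_{(i,j)∈{0,1}², λ₁−i ≥ λ₂−j ≥ 0} y^{i+j}·s_{(λ₁−i,λ₂−j,0)}`. -/
theorem stmt_7 (l1 l2 : ℤ) (h21 : l2 ≤ l1) (h2 : 0 ≤ l2) :
    (R / P) * ((x2 ^ (l1+1) * x3 ^ l2 - x2 ^ l2 * x3 ^ (l1+1)) / (x1 + y)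
             + (x3 ^ (l1+1) * x1 ^ l2 - x3 ^ l2 * x1 ^ (l1+1)) / (x2 + y)
             + (x1 ^ (l1+1) * x2 ^ l2 - x1 ^ l2 * x2 ^ (l1+1)) / (x3 + y))
    = ∑ p ∈ Finset.range 2 ×ˢ Finset.range 2,
        if l2 - p.2 ≤ l1 - p.1 ∧ 0 ≤ l2 - p.2 then
          y ^ (p.1 + p.2) * schur (l1 - p.1) (l2 - p.2) 0
        else 0 := by
  have hm := master (x1 ^ l1) (x2 ^ l1) (x3 ^ l1) (x1 ^ l2) (x2 ^ l2) (x3 ^ l2)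
  simp only [zpow_add_one₀ hx1, zpow_add_one₀ hx2, zpow_add_one₀ hx3]
  rw [Finset.sum_product]
  simp only [Finset.sum_range_succ, Finset.sum_range_zero, zero_add, Nat.cast_zero,
    Nat.cast_one, sub_zero, add_zero, pow_zero, pow_one, one_mul]
  simp only [schur]
  rcases eq_or_lt_of_le h2 with h20 | h20
  · -- l2 = 0
    rcases eq_or_lt_of_le h21 with h210 | h210
    · -- l1 = l2 = 0
      rw [← h20] at h210 hm ⊢
      rw [← h210] at hm ⊢
      rw [if_pos (by omega), if_neg (by omega), if_neg (by omega), if_neg (by omega)]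
      rw [a00]
      have z2 : dt (x1^(0:ℤ)*x1) (x1^(0:ℤ)*x1) (x2^(0:ℤ)*x2) (x2^(0:ℤ)*x2)
          (x3^(0:ℤ)*x3) (x3^(0:ℤ)*x3) = 0 := by rw [dt]; simp only [zpow_zero]; ring
      have z3 : dt (x1^(0:ℤ)*x1*x1) (x1^(0:ℤ)) (x2^(0:ℤ)*x2*x2) (x2^(0:ℤ))
          (x3^(0:ℤ)*x3*x3) (x3^(0:ℤ)) = 0 := by rw [dt]; simp only [zpow_zero]; ring
      have z4 : dt (x1^(0:ℤ)*x1) (x1^(0:ℤ)) (x2^(0:ℤ)*x2) (x2^(0:ℤ))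
          (x3^(0:ℤ)*x3) (x3^(0:ℤ)) = 0 := by rw [dt]; simp only [zpow_zero]; ring
      rw [z2, z3, z4] at hm
      linear_combination hm
    · -- l1 > 0 = l2
      rw [← h20] at h210 hm ⊢
      rw [if_pos (by omega), if_neg (by omega), if_pos (by omega), if_neg (by omega)]
      rw [a00]
      rw [show a (l1-1) 0 0 = dt (x1^l1*x1) (x1^(0:ℤ)*x1) (x2^l1*x2) (x2^(0:ℤ)*x2)
        (x3^l1*x3) (x3^(0:ℤ)*x3) from a10 l1 0]
      have z3 : dt (x1^l1*x1*x1) (x1^(0:ℤ)) (x2^l1*x2*x2) (x2^(0:ℤ))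
          (x3^l1*x3*x3) (x3^(0:ℤ)) = 0 := by rw [dt]; simp only [zpow_zero]; ring
      have z4 : dt (x1^l1*x1) (x1^(0:ℤ)) (x2^l1*x2) (x2^(0:ℤ))
          (x3^l1*x3) (x3^(0:ℤ)) = 0 := by rw [dt]; simp only [zpow_zero]; ring
      rw [z3, z4] at hm
      linear_combination hm
  · -- l2 > 0
    rcases eq_or_lt_of_le h21 with h210 | h210
    · -- l1 = l2 > 0
      rw [← h210] at hm ⊢
      rw [if_pos (by omega), if_pos (by omega), if_neg (by omega), if_pos (by omega)]
      rw [a00]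
      rw [show a l2 (l2-1) 0 = dt (x1^l2*x1*x1) (x1^l2) (x2^l2*x2*x2) (x2^l2)
        (x3^l2*x3*x3) (x3^l2) from a01 l2 l2]
      rw [show a (l2-1) (l2-1) 0 = dt (x1^l2*x1) (x1^l2) (x2^l2*x2) (x2^l2)
        (x3^l2*x3) (x3^l2) from a11 l2 l2]
      have z2 : dt (x1^l2*x1) (x1^l2*x1) (x2^l2*x2) (x2^l2*x2)
          (x3^l2*x3) (x3^l2*x3) = 0 := by rw [dt]; ring
      rw [z2] at hm
      linear_combination hm
    · -- l1 > l2 > 0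
      rw [if_pos (by omega), if_pos (by omega), if_pos (by omega), if_pos (by omega)]
      rw [a00]
      rw [show a (l1-1) l2 0 = dt (x1^l1*x1) (x1^l2*x1) (x2^l1*x2) (x2^l2*x2)
        (x3^l1*x3) (x3^l2*x3) from a10 l1 l2]
      rw [show a l1 (l2-1) 0 = dt (x1^l1*x1*x1) (x1^l2) (x2^l1*x2*x2) (x2^l2)
        (x3^l1*x3*x3) (x3^l2) from a01 l1 l2]
      rw [show a (l1-1) (l2-1) 0 = dt (x1^l1*x1) (x1^l2) (x2^l1*x2) (x2^l2)
        (x3^l1*x3) (x3^l2) from a11 l1 l2]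
      linear_combination hm
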